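/- Let d ≥ 2, 0 < α < d, and let g : ℝ^d → [0,∞) be bounded, measurable, with compact support. Then there is a constant N = N(d, α) such that ⨍_{B_1} ⨍_{B_1} |P_α g(x) − P_α g(y)| dx dy ≤ N · M_α g(0), where B_1 is the unit ball centered at the origin. -/

import Mathlib

open MeasureTheory ENNReal Metric Set

/-- The Riesz potential `P_α f (x) = ∫ f(y) / |x-y|^(d-α) dy`. -/
noncomputable def rieszPotential (d : ℕ) (α : ℝ) (f : EuclideanSpace ℝ (Fin d) → ℝ)
    (x : EuclideanSpace ℝ (Fin d)) : ℝ :=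
  ∫ y, f y / ‖x - y‖ ^ ((d : ℝ) - α)

/-- The fractional maximal function `M_β g (x) = sup_{ρ>0} ρ^β ⨍_{B_ρ(x)} |g|`. -/
noncomputable def fracMaximal (d : ℕ) (β : ℝ) (g : EuclideanSpace ℝ (Fin d) → ℝ)
    (x : EuclideanSpace ℝ (Fin d)) : ℝ≥0∞ :=
  ⨆ (ρ : ℝ) (_ : 0 < ρ), ENNReal.ofReal (ρ ^ β * ⨍ y in ball x ρ, |g y|)

/-!
With `s = α - d ∈ (-d, 0)` we have `P_α g(x) = ∫ g(z) |x - z|^s dz`, and `M_α g(0) = M` gives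
`∫_{B_ρ} |g| ≤ |B_1| ρ^(-s) M` for every `ρ > 0`. For `x, y ∈ B_1` split the integral of
`|g(z)| · | |x - z|^s - |y - z|^s |` at `|z| = 2`:

* for `|z| < 2` bound the kernel difference by the sum of the two kernels; after averaging in `x`
  and exchanging the integrals, `∫_{B_1} |x - z|^s dx ≤ ∫_{B_3} |w|^s dw < ∞`, which leaves
  `∫_{B_2} |g| ≲ M`;
* for `|z| ≥ 2` the mean value theorem bounds the kernel difference by `≲ |z|^(s-1)`, and summing
  the ball bound over the dyadic annuli `2^k ≤ |z| / 2 < 2^(k+1)` gives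
  `∫_{|z| ≥ 2} |g(z)| |z|^(s-1) dz ≲ M`.

The estimates are carried out for lower Lebesgue integrals, so that only the integrals defining
`P_α g` need integrability.
-/

theorem abs_rpow_sub_rpow_le {s : ℝ} (hs : s ≤ 0) {m a b : ℝ} (hm : 0 < m) (ha : m ≤ a)
    (hb : m ≤ b) : |a ^ s - b ^ s| ≤ -s * m ^ (s - 1) * |a - b| := by
  have hderiv : ∀ t ∈ Ici m, HasDerivWithinAt (fun t : ℝ => t ^ s) (s * t ^ (s - 1)) (Ici m) t :=
    fun t ht => (Real.hasDerivAt_rpow_const (Or.inl (hm.trans_le ht).ne')).hasDerivWithinAt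
  have hbound : ∀ t ∈ Ici m, ‖s * t ^ (s - 1)‖ ≤ -s * m ^ (s - 1) := fun t ht => by
    rw [norm_mul, Real.norm_of_nonpos hs, Real.norm_of_nonneg (by positivity [hm.trans_le ht])]
    exact mul_le_mul_of_nonneg_left
      (Real.rpow_le_rpow_of_nonpos hm ht (by linarith)) (neg_nonneg.2 hs)
  simpa only [Real.norm_eq_abs] using
    (convex_Ici m).norm_image_sub_le_of_norm_hasDerivWithin_le hderiv hbound hb ha

theorem abs_norm_sub_rpow_sub_le {E : Type*} [SeminormedAddCommGroup E] {s : ℝ} (hs : s ≤ 0)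
    {x y z : E} (hx : ‖x‖ < 1) (hy : ‖y‖ < 1) (hz : 2 ≤ ‖z‖) :
    |‖x - z‖ ^ s - ‖y - z‖ ^ s| ≤ -s * 2 ^ (2 - s) * ‖z‖ ^ (s - 1) := by
  have hfar : ∀ w : E, ‖w‖ < 1 → ‖z‖ / 2 ≤ ‖w - z‖ := fun w hw => by
    have := norm_sub_norm_le z w
    rw [norm_sub_rev] at this
    linarith
  have hdiff : |‖x - z‖ - ‖y - z‖| ≤ 2 := by
    calc |‖x - z‖ - ‖y - z‖| ≤ ‖(x - z) - (y - z)‖ := abs_norm_sub_norm_le _ _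
      _ = ‖x - y‖ := by rw [sub_sub_sub_cancel_right]
      _ ≤ ‖x‖ + ‖y‖ := norm_sub_le _ _
      _ ≤ 2 := by linarith
  have hz0 : 0 < ‖z‖ := by linarith
  calc |‖x - z‖ ^ s - ‖y - z‖ ^ s| ≤ -s * (‖z‖ / 2) ^ (s - 1) * |‖x - z‖ - ‖y - z‖| :=
        abs_rpow_sub_rpow_le hs (by positivity) (hfar x hx) (hfar y hy)
    _ ≤ -s * (‖z‖ / 2) ^ (s - 1) * 2 :=
      mul_le_mul_of_nonneg_left hdiff (mul_nonneg (neg_nonneg.2 hs) (by positivity))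
    _ = -s * 2 ^ (2 - s) * ‖z‖ ^ (s - 1) := by
      rw [Real.div_rpow hz0.le zero_le_two, Real.rpow_sub two_pos, Real.rpow_sub two_pos,
        Real.rpow_two, Real.rpow_one]
      field_simp

theorem compl_ball_subset_iUnion_annulus {E : Type*} [SeminormedAddCommGroup E] {R : ℝ}
    (hR : 0 < R) :
    (ball (0 : E) R)ᶜ ⊆ ⋃ k : ℕ, (ball 0 (2 ^ k * R))ᶜ ∩ ball 0 (2 ^ (k + 1) * R) := by
  intro z hz
  rw [mem_compl_iff, mem_ball_zero_iff, not_lt] at hz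
  obtain ⟨k, hk1, hk2⟩ := exists_nat_pow_near ((one_le_div hR).2 hz) one_lt_two
  refine mem_iUnion.2 ⟨k, ?_, ?_⟩
  · rw [mem_compl_iff, mem_ball_zero_iff, not_lt]
    rwa [le_div_iff₀ hR] at hk1
  · rw [mem_ball_zero_iff]
    rwa [div_lt_iff₀ hR] at hk2

theorem setLAverage_setLAverage_le_of_le_add {α : Type*} [MeasurableSpace α] {μ : Measure α}
    {s : Set α} (hs : MeasurableSet s) (hμs : μ s ≠ 0) (hμs' : μ s ≠ ∞)
    {F : α → α → ℝ≥0∞} {a : α → ℝ≥0∞} (ha : Measurable a) {b : ℝ≥0∞}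
    (hF : ∀ x ∈ s, ∀ y ∈ s, F x y ≤ a x + a y + b) :
    ⨍⁻ x in s, ⨍⁻ y in s, F x y ∂μ ∂μ ≤ 2 * ⨍⁻ x in s, a x ∂μ + b := by
  simp_rw [setLAverage_eq']
  set ν := (μ s)⁻¹ • μ.restrict s
  have : IsProbabilityMeasure ν := ⟨by simp [ν, ENNReal.inv_mul_cancel hμs hμs']⟩
  have hae : ∀ᵐ x ∂ν, x ∈ s := Measure.ae_smul_measure (ae_restrict_mem hs) _
  have hinner : ∀ x ∈ s, ∫⁻ y, F x y ∂ν ≤ a x + (b + ∫⁻ y, a y ∂ν) := by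
    intro x hx
    calc ∫⁻ y, F x y ∂ν ≤ ∫⁻ y, a x + b + a y ∂ν :=
          lintegral_mono_ae (hae.mono fun y hy => (hF x hx y hy).trans_eq (add_right_comm _ _ _))
      _ = a x + (b + ∫⁻ y, a y ∂ν) := by
          rw [lintegral_add_right _ ha, lintegral_const, measure_univ, mul_one, add_assoc]
  calc ∫⁻ x, ∫⁻ y, F x y ∂ν ∂ν ≤ ∫⁻ x, a x + (b + ∫⁻ y, a y ∂ν) ∂ν :=
        lintegral_mono_ae (hae.mono hinner)
    _ = 2 * ∫⁻ x, a x ∂ν + b := by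
        rw [lintegral_add_left ha, lintegral_const, measure_univ, mul_one]
        ring

theorem ofReal_setAverage_setAverage_abs_le {α : Type*} [MeasurableSpace α] {μ : Measure α}
    (s : Set α) (f : α → α → ℝ) :
    ENNReal.ofReal (⨍ x in s, ⨍ y in s, |f x y| ∂μ ∂μ) ≤ ⨍⁻ x in s, ⨍⁻ y in s, ‖f x y‖ₑ ∂μ ∂μ :=
  calc ENNReal.ofReal (⨍ x in s, ⨍ y in s, |f x y| ∂μ ∂μ)
      ≤ ‖⨍ x in s, ⨍ y in s, |f x y| ∂μ ∂μ‖ₑ := by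
        rw [Real.enorm_eq_ofReal_abs]; exact ofReal_le_ofReal (le_abs_self _)
    _ ≤ ⨍⁻ x in s, ‖⨍ y in s, |f x y| ∂μ‖ₑ ∂μ := enorm_integral_le_lintegral_enorm _
    _ ≤ ⨍⁻ x in s, ⨍⁻ y in s, ‖f x y‖ₑ ∂μ ∂μ := lintegral_mono fun x =>
        (enorm_integral_le_lintegral_enorm _).trans_eq (by simp only [Real.enorm_abs]; rfl)

section Kernel

variable {E : Type*} [NormedAddCommGroup E] [MeasurableSpace E] [BorelSpace E] {μ : Measure E}

theorem setLIntegral_ofReal_norm_sub_rpow_le [μ.IsAddRightInvariant] (s : ℝ) {x : E} {r : ℝ}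
    {t : Set E} (ht : t ⊆ ball x r) :
    ∫⁻ z in t, ENNReal.ofReal (‖z - x‖ ^ s) ∂μ ≤ ∫⁻ w in ball 0 r, ENNReal.ofReal (‖w‖ ^ s) ∂μ := by
  have hpre : (fun z => z - x) ⁻¹' ball (0 : E) r = ball x r := by
    ext z; simp [dist_eq_norm]
  calc ∫⁻ z in t, ENNReal.ofReal (‖z - x‖ ^ s) ∂μ
      ≤ ∫⁻ z in ball x r, ENNReal.ofReal (‖z - x‖ ^ s) ∂μ := lintegral_mono_set ht
    _ = ∫⁻ w in ball 0 r, ENNReal.ofReal (‖w‖ ^ s) ∂μ := by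
      rw [← hpre]
      exact (measurePreserving_sub_right μ x).setLIntegral_comp_preimage measurableSet_ball
        (measurable_norm.pow_const s).ennreal_ofReal

theorem measurable_mul_ofReal_norm_sub_rpow [SecondCountableTopology E] {G : E → ℝ≥0∞}
    (hG : Measurable G) (s : ℝ) :
    Measurable fun p : E × E => G p.2 * ENNReal.ofReal (‖p.1 - p.2‖ ^ s) :=
  (hG.comp measurable_snd).mul ((measurable_fst.sub measurable_snd).norm.pow_const s).ennreal_ofReal

theorem lintegral_ball_lintegral_ball_mul_norm_sub_rpow_le [SecondCountableTopology E] [SFinite μ]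
    [μ.IsAddRightInvariant] {G : E → ℝ≥0∞} (hG : Measurable G) (s r R : ℝ) :
    ∫⁻ x in ball 0 r, ∫⁻ z in ball 0 R, G z * ENNReal.ofReal (‖x - z‖ ^ s) ∂μ ∂μ ≤
      (∫⁻ w in ball 0 (r + R), ENNReal.ofReal (‖w‖ ^ s) ∂μ) * ∫⁻ z in ball 0 R, G z ∂μ := by
  rw [lintegral_lintegral_swap (measurable_mul_ofReal_norm_sub_rpow hG s).aemeasurable]
  calc ∫⁻ z in ball 0 R, ∫⁻ x in ball 0 r, G z * ENNReal.ofReal (‖x - z‖ ^ s) ∂μ ∂μ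
      = ∫⁻ z in ball 0 R, G z * ∫⁻ x in ball 0 r, ENNReal.ofReal (‖x - z‖ ^ s) ∂μ ∂μ := by
        congr! 2 with z
        exact lintegral_const_mul _ ((measurable_id.sub_const z).norm.pow_const s).ennreal_ofReal
    _ ≤ ∫⁻ z in ball 0 R, G z * ∫⁻ w in ball 0 (r + R), ENNReal.ofReal (‖w‖ ^ s) ∂μ ∂μ :=
        setLIntegral_mono' measurableSet_ball fun z hz => mul_le_mul_of_nonneg_left
          (setLIntegral_ofReal_norm_sub_rpow_le s (ball_subset_ball' (by
            rw [dist_comm]; linarith [mem_ball.1 hz]))) zero_le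
    _ = (∫⁻ w in ball 0 (r + R), ENNReal.ofReal (‖w‖ ^ s) ∂μ) * ∫⁻ z in ball 0 R, G z ∂μ := by
        rw [lintegral_mul_const _ hG, mul_comm]

theorem setLIntegral_compl_ball_mul_rpow_le {G : E → ℝ≥0∞} {β γ R : ℝ} {c : ℝ≥0∞}
    (hγ : 0 ≤ γ) (hβγ : β < γ) (hR : 0 < R)
    (hG : ∀ ρ, 0 < ρ → ∫⁻ z in ball 0 ρ, G z ∂μ ≤ ENNReal.ofReal (ρ ^ β) * c) :
    ∫⁻ z in (ball 0 R)ᶜ, G z * ENNReal.ofReal (‖z‖ ^ (-γ)) ∂μ ≤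
      ENNReal.ofReal (2 ^ β * R ^ (β - γ) / (1 - 2 ^ (β - γ))) * c := by
  set annulus : ℕ → Set E := fun k => (ball 0 (2 ^ k * R))ᶜ ∩ ball 0 (2 ^ (k + 1) * R)
  have hscale : ∀ k : ℕ, (2 ^ (k + 1) * R) ^ β * (2 ^ k * R) ^ (-γ) =
      2 ^ β * R ^ (β - γ) * (2 ^ (β - γ)) ^ k := fun k => by
    rw [Real.mul_rpow (by positivity) hR.le, Real.mul_rpow (by positivity) hR.le,
      ← Real.rpow_pow_comm zero_le_two, ← Real.rpow_pow_comm zero_le_two, pow_succ,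
      Real.rpow_sub zero_lt_two, Real.rpow_sub hR, Real.rpow_neg zero_le_two,
      Real.rpow_neg hR.le, inv_pow, div_pow]
    field_simp
  have hannulus : ∀ k : ℕ, ∫⁻ z in annulus k, G z * ENNReal.ofReal (‖z‖ ^ (-γ)) ∂μ ≤
      ENNReal.ofReal (2 ^ β * R ^ (β - γ) * (2 ^ (β - γ)) ^ k) * c := by
    intro k
    have hrk : 0 < 2 ^ k * R := by positivity
    calc ∫⁻ z in annulus k, G z * ENNReal.ofReal (‖z‖ ^ (-γ)) ∂μ
        ≤ ∫⁻ z in annulus k, G z * ENNReal.ofReal ((2 ^ k * R) ^ (-γ)) ∂μ :=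
          setLIntegral_mono' (measurableSet_ball.compl.inter measurableSet_ball)
            fun z hz => mul_le_mul_of_nonneg_left (ofReal_le_ofReal
              (Real.rpow_le_rpow_of_nonpos hrk (by simpa using hz.1) (neg_nonpos.2 hγ))) zero_le
      _ = (∫⁻ z in annulus k, G z ∂μ) * ENNReal.ofReal ((2 ^ k * R) ^ (-γ)) :=
          lintegral_mul_const' _ _ ofReal_ne_top
      _ ≤ ENNReal.ofReal ((2 ^ (k + 1) * R) ^ β) * c * ENNReal.ofReal ((2 ^ k * R) ^ (-γ)) := by
          gcongr
          exact (lintegral_mono_set inter_subset_right).trans (hG _ (by positivity))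
      _ = ENNReal.ofReal (2 ^ β * R ^ (β - γ) * (2 ^ (β - γ)) ^ k) * c := by
          rw [mul_right_comm, ← ofReal_mul (by positivity), hscale]
  have hr : 0 ≤ (2 : ℝ) ^ (β - γ) := by positivity
  have hr1 : (2 : ℝ) ^ (β - γ) < 1 := Real.rpow_lt_one_of_one_lt_of_neg one_lt_two (by linarith)
  calc ∫⁻ z in (ball 0 R)ᶜ, G z * ENNReal.ofReal (‖z‖ ^ (-γ)) ∂μ
      ≤ ∫⁻ z in ⋃ k, annulus k, G z * ENNReal.ofReal (‖z‖ ^ (-γ)) ∂μ :=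
        lintegral_mono_set (compl_ball_subset_iUnion_annulus hR)
    _ ≤ ∑' k, ∫⁻ z in annulus k, G z * ENNReal.ofReal (‖z‖ ^ (-γ)) ∂μ := lintegral_iUnion_le _ _
    _ ≤ ∑' k : ℕ, ENNReal.ofReal (2 ^ β * R ^ (β - γ) * (2 ^ (β - γ)) ^ k) * c :=
      ENNReal.tsum_le_tsum hannulus
    _ = ENNReal.ofReal (2 ^ β * R ^ (β - γ) / (1 - 2 ^ (β - γ))) * c := by
      rw [ENNReal.tsum_mul_right, ← ENNReal.ofReal_tsum_of_nonneg (fun k => by positivity)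
        ((summable_geometric_of_lt_one hr hr1).mul_left _), tsum_mul_left,
        tsum_geometric_of_lt_one hr hr1, div_eq_mul_inv]

theorem enorm_integral_mul_norm_sub_rpow_sub_le {g : E → ℝ} (hg : Measurable g) {s : ℝ}
    (hs : s ≤ 0) {x y : E} (hx : ‖x‖ < 1) (hy : ‖y‖ < 1)
    (hix : Integrable (fun z => g z * ‖x - z‖ ^ s) μ)
    (hiy : Integrable (fun z => g z * ‖y - z‖ ^ s) μ) :
    ‖∫ z, g z * ‖x - z‖ ^ s ∂μ - ∫ z, g z * ‖y - z‖ ^ s ∂μ‖ₑ ≤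
      ∫⁻ z in ball 0 2, ‖g z‖ₑ * ENNReal.ofReal (‖x - z‖ ^ s) ∂μ +
        ∫⁻ z in ball 0 2, ‖g z‖ₑ * ENNReal.ofReal (‖y - z‖ ^ s) ∂μ +
        ENNReal.ofReal (-s * 2 ^ (2 - s)) *
          ∫⁻ z in (ball 0 2)ᶜ, ‖g z‖ₑ * ENNReal.ofReal (‖z‖ ^ (s - 1)) ∂μ := by
  have hnear : Measurable fun z => ‖g z‖ₑ * ENNReal.ofReal (‖x - z‖ ^ s) :=
    hg.enorm.mul ((measurable_id.const_sub x).norm.pow_const s).ennreal_ofReal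
  have hfar : Measurable fun z => ‖g z‖ₑ * ENNReal.ofReal (‖z‖ ^ (s - 1)) :=
    hg.enorm.mul (measurable_norm.pow_const (s - 1)).ennreal_ofReal
  rw [← integral_sub hix hiy]
  refine (enorm_integral_le_lintegral_enorm _).trans ?_
  simp_rw [← mul_sub, enorm_mul, Real.enorm_eq_ofReal_abs (_ - _)]
  rw [← lintegral_add_compl _ (measurableSet_ball (x := 0) (ε := 2)),
    ← lintegral_add_left hnear, ← lintegral_const_mul _ hfar]
  refine add_le_add (setLIntegral_mono' measurableSet_ball fun z _ => ?_)
    (setLIntegral_mono' measurableSet_ball.compl fun z hz => ?_)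
  · have hxz : 0 ≤ ‖x - z‖ ^ s := by positivity
    have hyz : 0 ≤ ‖y - z‖ ^ s := by positivity
    rw [← mul_add, ← ofReal_add hxz hyz]
    gcongr
    exact abs_sub_le_iff.2 ⟨by linarith, by linarith⟩
  · rw [mem_compl_iff, mem_ball_zero_iff, not_lt] at hz
    rw [mul_left_comm, ← ofReal_mul (mul_nonneg (neg_nonneg.2 hs) (by positivity))]
    gcongr
    exact abs_norm_sub_rpow_sub_le hs hx hy hz

variable [NormedSpace ℝ E] [FiniteDimensional ℝ E] [Nontrivial E] [μ.IsAddHaarMeasure]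

theorem setLIntegral_ofReal_norm_rpow_ball_lt_top {s : ℝ} (hs : -(Module.finrank ℝ E : ℝ) < s)
    (r : ℝ) : ∫⁻ w in ball 0 r, ENNReal.ofReal (‖w‖ ^ s) ∂μ < ∞ := by
  refine (integrableOn_ball_of_norm_le_rpow (C := 1) (α := -s) Module.finrank_pos (by linarith)
    (ae_of_all _ fun w => ?_)
    (measurable_norm.pow_const s).aestronglyMeasurable).setLIntegral_lt_top
  rw [neg_neg, one_mul, Real.norm_of_nonneg (by positivity)]

theorem integrable_mul_norm_sub_rpow {s : ℝ} (hs : -(Module.finrank ℝ E : ℝ) < s) {g : E → ℝ}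
    (hg : AEStronglyMeasurable g μ) (hgc : HasCompactSupport g) {C : ℝ} (hC : ∀ z, ‖g z‖ ≤ C)
    (x : E) : Integrable (fun z => g z * ‖x - z‖ ^ s) μ := by
  obtain ⟨r, hr⟩ := hgc.isBounded.subset_ball x
  have hk : IntegrableOn (fun z => ‖x - z‖ ^ s) (tsupport g) μ := by
    refine ⟨((measurable_id.const_sub x).norm.pow_const s).aestronglyMeasurable, ?_⟩
    simp_rw [HasFiniteIntegral, Real.enorm_of_nonneg (Real.rpow_nonneg (norm_nonneg _) _),
      norm_sub_rev x]
    exact (setLIntegral_ofReal_norm_sub_rpow_le s hr).trans_lt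
      (setLIntegral_ofReal_norm_rpow_ball_lt_top hs r)
  refine IntegrableOn.integrable_of_forall_notMem_eq_zero
    (hk.bdd_mul hg.restrict (ae_of_all _ hC)) fun z hz => ?_
  rw [image_eq_zero_of_notMem_tsupport hz, zero_mul]

theorem exists_setLAverage_setLAverage_enorm_sub_le {s : ℝ} (hsn : -(Module.finrank ℝ E : ℝ) < s)
    (hs : s ≤ 0) :
    ∃ C : ℝ≥0∞, C ≠ ∞ ∧ ∀ g : E → ℝ, Measurable g →
      (∀ x, Integrable (fun z => g z * ‖x - z‖ ^ s) μ) → ∀ c : ℝ≥0∞,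
      (∀ ρ, 0 < ρ → ∫⁻ z in ball 0 ρ, ‖g z‖ₑ ∂μ ≤ ENNReal.ofReal (ρ ^ (-s)) * c) →
      ⨍⁻ x in ball 0 1, ⨍⁻ y in ball 0 1,
        ‖∫ z, g z * ‖x - z‖ ^ s ∂μ - ∫ z, g z * ‖y - z‖ ^ s ∂μ‖ₑ ∂μ ∂μ ≤ C * c := by
  set κ := ∫⁻ w in ball (0 : E) 3, ENNReal.ofReal (‖w‖ ^ s) ∂μ
  have hκ : κ ≠ ∞ := (setLIntegral_ofReal_norm_rpow_ball_lt_top hsn 3).ne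
  have hB : μ (ball 0 1) ≠ 0 := (measure_ball_pos μ 0 one_pos).ne'
  refine ⟨2 * (κ * ENNReal.ofReal (2 ^ (-s)) / μ (ball 0 1)) +
    ENNReal.ofReal (-s * 2 ^ (2 - s)) * ENNReal.ofReal (2 ^ (-s)), by finiteness, ?_⟩
  intro g hg hint c hc
  set near : E → ℝ≥0∞ := fun x => ∫⁻ z in ball 0 2, ‖g z‖ₑ * ENNReal.ofReal (‖x - z‖ ^ s) ∂μ
  have hnear_meas : Measurable near :=
    (measurable_mul_ofReal_norm_sub_rpow hg.enorm s).lintegral_prod_right'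
  have hnear : ⨍⁻ x in ball 0 1, near x ∂μ ≤
      κ * (ENNReal.ofReal (2 ^ (-s)) * c) / μ (ball 0 1) := by
    rw [setLAverage_eq]
    gcongr
    refine (lintegral_ball_lintegral_ball_mul_norm_sub_rpow_le hg.enorm s 1 2).trans ?_
    rw [show (1 : ℝ) + 2 = 3 by norm_num]
    exact mul_le_mul_of_nonneg_left (hc 2 two_pos) zero_le
  have htail : ∫⁻ z in (ball 0 2)ᶜ, ‖g z‖ₑ * ENNReal.ofReal (‖z‖ ^ (s - 1)) ∂μ ≤
      ENNReal.ofReal (2 ^ (-s)) * c := by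
    have h := setLIntegral_compl_ball_mul_rpow_le (G := fun z => ‖g z‖ₑ) (γ := 1 - s)
      (by linarith) (by linarith) two_pos hc
    have hconst : (2 : ℝ) ^ (-s) * 2 ^ (-s - (1 - s)) / (1 - 2 ^ (-s - (1 - s))) = 2 ^ (-s) := by
      rw [show -s - (1 - s) = -1 by ring, Real.rpow_neg_one]
      norm_num
    rwa [neg_sub, hconst] at h
  calc ⨍⁻ x in ball 0 1, ⨍⁻ y in ball 0 1,
        ‖∫ z, g z * ‖x - z‖ ^ s ∂μ - ∫ z, g z * ‖y - z‖ ^ s ∂μ‖ₑ ∂μ ∂μ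
      ≤ 2 * ⨍⁻ x in ball 0 1, near x ∂μ + ENNReal.ofReal (-s * 2 ^ (2 - s)) *
          ∫⁻ z in (ball 0 2)ᶜ, ‖g z‖ₑ * ENNReal.ofReal (‖z‖ ^ (s - 1)) ∂μ :=
        setLAverage_setLAverage_le_of_le_add measurableSet_ball hB measure_ball_lt_top.ne
          hnear_meas fun x hx y hy => enorm_integral_mul_norm_sub_rpow_sub_le hg hs
            (mem_ball_zero_iff.1 hx) (mem_ball_zero_iff.1 hy) (hint x) (hint y)
    _ ≤ 2 * (κ * (ENNReal.ofReal (2 ^ (-s)) * c) / μ (ball 0 1)) +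
          ENNReal.ofReal (-s * 2 ^ (2 - s)) * (ENNReal.ofReal (2 ^ (-s)) * c) := by
        gcongr
    _ = (2 * (κ * ENNReal.ofReal (2 ^ (-s)) / μ (ball 0 1)) +
          ENNReal.ofReal (-s * 2 ^ (2 - s)) * ENNReal.ofReal (2 ^ (-s))) * c := by
        simp only [div_eq_mul_inv]
        ring

end Kernel

theorem rieszPotential_eq_integral_mul_rpow (d : ℕ) (α : ℝ) (f : EuclideanSpace ℝ (Fin d) → ℝ)
    (x : EuclideanSpace ℝ (Fin d)) :
    rieszPotential d α f x = ∫ y, f y * ‖x - y‖ ^ (α - d) := by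
  simp_rw [rieszPotential, div_eq_mul_inv, ← Real.rpow_neg (norm_nonneg _), neg_sub]

theorem setLIntegral_enorm_ball_le_fracMaximal {d : ℕ} {β ρ : ℝ} (hρ : 0 < ρ)
    {g : EuclideanSpace ℝ (Fin d) → ℝ} {x : EuclideanSpace ℝ (Fin d)}
    (hg : IntegrableOn g (ball x ρ)) :
    ∫⁻ z in ball x ρ, ‖g z‖ₑ ≤ ENNReal.ofReal (ρ ^ ((d : ℝ) - β)) *
      (volume (ball (0 : EuclideanSpace ℝ (Fin d)) 1) * fracMaximal d β g x) := by
  have hM : ENNReal.ofReal (ρ ^ β * ⨍ y in ball x ρ, |g y|) ≤ fracMaximal d β g x :=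
    le_iSup₂ (f := fun (ρ : ℝ) (_ : 0 < ρ) => ENNReal.ofReal (ρ ^ β * ⨍ y in ball x ρ, |g y|)) ρ hρ
  rw [ofReal_mul (by positivity), ofReal_setAverage hg.abs (ae_of_all _ fun _ => abs_nonneg _)]
    at hM
  set avg := (∫⁻ z in ball x ρ, ENNReal.ofReal |g z|) / volume (ball x ρ)
  have hvol : volume (ball x ρ) = ENNReal.ofReal (ρ ^ ((d : ℝ) - β)) * ENNReal.ofReal (ρ ^ β) *
      volume (ball (0 : EuclideanSpace ℝ (Fin d)) 1) := by
    rw [Measure.addHaar_ball_of_pos _ _ hρ, finrank_euclideanSpace_fin,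
      ← ofReal_mul (by positivity), ← Real.rpow_add hρ, sub_add_cancel, Real.rpow_natCast]
  calc ∫⁻ z in ball x ρ, ‖g z‖ₑ = volume (ball x ρ) * avg := by
        simp_rw [avg, Real.enorm_eq_ofReal_abs]
        rw [ENNReal.mul_div_cancel (measure_ball_pos _ _ hρ).ne' measure_ball_lt_top.ne]
    _ = ENNReal.ofReal (ρ ^ ((d : ℝ) - β)) *
          (volume (ball (0 : EuclideanSpace ℝ (Fin d)) 1) * (ENNReal.ofReal (ρ ^ β) * avg)) := by
        rw [hvol]; ring
    _ ≤ ENNReal.ofReal (ρ ^ ((d : ℝ) - β)) *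
          (volume (ball (0 : EuclideanSpace ℝ (Fin d)) 1) * fracMaximal d β g x) := by
        gcongr

theorem double_average_riesz_le_general (d : ℕ) (α : ℝ)
    (hα0 : 0 < α) (hαd : α < d) :
    ∃ N : ℝ, 0 < N ∧
      ∀ g : EuclideanSpace ℝ (Fin d) → ℝ,
        Measurable g → HasCompactSupport g → (∀ x, 0 ≤ g x) →
        (∃ C : ℝ, ∀ x, g x ≤ C) →
        ENNReal.ofReal
            (⨍ x in ball (0 : EuclideanSpace ℝ (Fin d)) 1,
              ⨍ y in ball (0 : EuclideanSpace ℝ (Fin d)) 1,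
                |rieszPotential d α g x - rieszPotential d α g y|) ≤
          ENNReal.ofReal N * fracMaximal d α g 0 := by
  have : Nonempty (Fin d) := ⟨⟨0, by exact_mod_cast hα0.trans hαd⟩⟩
  obtain ⟨C, hC, hosc⟩ := exists_setLAverage_setLAverage_enorm_sub_le
    (μ := (volume : Measure (EuclideanSpace ℝ (Fin d)))) (s := α - d)
    (by rw [finrank_euclideanSpace_fin]; linarith) (by linarith)
  set B := volume (ball (0 : EuclideanSpace ℝ (Fin d)) 1)
  refine ⟨(C * B).toReal + 1, by positivity, fun g hg hgc hg0 ⟨C₀, hC₀⟩ => ?_⟩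
  have hbdd : ∀ z, ‖g z‖ ≤ C₀ := fun z => by rw [Real.norm_of_nonneg (hg0 z)]; exact hC₀ z
  have hball : ∀ ρ, 0 < ρ → ∫⁻ z in ball 0 ρ, ‖g z‖ₑ ≤
      ENNReal.ofReal (ρ ^ (-(α - d))) * (B * fracMaximal d α g 0) := fun ρ hρ => by
    rw [neg_sub]
    exact setLIntegral_enorm_ball_le_fracMaximal hρ
      (Measure.integrableOn_of_bounded measure_ball_lt_top.ne hg.aestronglyMeasurable
        (ae_of_all _ hbdd))
  calc ENNReal.ofReal (⨍ x in ball 0 1, ⨍ y in ball 0 1,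
        |rieszPotential d α g x - rieszPotential d α g y|)
      ≤ ⨍⁻ x in ball 0 1, ⨍⁻ y in ball 0 1,
        ‖rieszPotential d α g x - rieszPotential d α g y‖ₑ ∂volume ∂volume :=
        ofReal_setAverage_setAverage_abs_le _ _
    _ ≤ C * (B * fracMaximal d α g 0) := by
        simp_rw [rieszPotential_eq_integral_mul_rpow]
        exact hosc g hg (integrable_mul_norm_sub_rpow
          (by rw [finrank_euclideanSpace_fin]; linarith) hg.aestronglyMeasurable hgc hbdd) _ hball
    _ ≤ ENNReal.ofReal ((C * B).toReal + 1) * fracMaximal d α g 0 := by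
        rw [← mul_assoc]
        gcongr
        exact le_ofReal_iff_toReal_le (by finiteness) (by positivity) |>.2 (by linarith)

/-- `⨍_{B_1}⨍_{B_1} |P_α g(x) - P_α g(y)| dx dy ≤ N M_α g(0)` for bounded nonnegative
compactly supported `g`. -/
theorem double_average_riesz_le (d : ℕ) (hd : 2 ≤ d) (α : ℝ)
    (hα0 : 0 < α) (hαd : α < d) :
    ∃ N : ℝ, 0 < N ∧
      ∀ g : EuclideanSpace ℝ (Fin d) → ℝ,
        Measurable g → HasCompactSupport g → (∀ x, 0 ≤ g x) →
        (∃ C : ℝ, ∀ x, g x ≤ C) →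
        ENNReal.ofReal
            (⨍ x in ball (0 : EuclideanSpace ℝ (Fin d)) 1,
              ⨍ y in ball (0 : EuclideanSpace ℝ (Fin d)) 1,
                |rieszPotential d α g x - rieszPotential d α g y|) ≤
          ENNReal.ofReal N * fracMaximal d α g 0 :=
  double_average_riesz_le_general d α hα0 hαd
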